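/- arXiv:2009.05685 — 7 statements merged into one kernel-verified Lean document; each statement's English description precedes it below -/
import Mathlib

section
/- Let q be a prime power, S ⊆ F_q \ {0} symmetric (S = -S) with |S| = s, and G = Γ(F_q, S). If the strong power G^n contains a linear independent set of the form {(x, Ax) : x ∈ F_q^m} for a matrix A ∈ F_q^{(n−m)×m}, then s·m ≤ (n−m)·(q−1−s), i.e., m/n ≤ 1 − s/(q−1). -/
open SimpleGraph MvPolynomial

/-- The `n`-th strong power of a graph `G`: vertices are `n`-tuples, and two distinct
tuples are adjacent iff in every coordinate the entries are equal or adjacent in `G`. -/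
def strongPow {V : Type*} (G : SimpleGraph V) (n : ℕ) : SimpleGraph (Fin n → V) where
  Adj x y := x ≠ y ∧ ∀ i, x i = y i ∨ G.Adj (x i) (y i)
  symm := by
    constructor
    rintro x y ⟨hne, h⟩
    exact ⟨hne.symm, fun i => (h i).imp Eq.symm (fun hadj => hadj.symm)⟩
  loopless := by
    constructor
    rintro x ⟨hne, -⟩
    exact hne rfl

/-- The Cayley graph on the additive group of a field `F` with connection set `S`:
`u ~ v` iff `u ≠ v` and `u - v ∈ S` (symmetrized; for symmetric `S` this is `u - v ∈ S`). -/
def cayley {F : Type*} [Field F] (S : Set F) : SimpleGraph F where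
  Adj u v := u ≠ v ∧ (u - v ∈ S ∨ v - u ∈ S)
  symm := by
    constructor
    rintro u v ⟨hne, h⟩
    exact ⟨hne.symm, h.symm⟩
  loopless := by
    constructor
    rintro u ⟨hne, -⟩
    exact hne rfl

/-- A set `I` is independent in `G` if no two of its elements are adjacent. -/
def IsIndep {V : Type*} (G : SimpleGraph V) (I : Set V) : Prop :=
  ∀ x ∈ I, ∀ y ∈ I, ¬ G.Adj x y

/-- The linear independence number of the `n`-th strong power of a graph on `F`:
the largest size of an independent set which is an `F`-linear subspace of `F^n`. -/
noncomputable def alphaLin {F : Type*} [Field F] [Fintype F] (G : SimpleGraph F) (n : ℕ) : ℕ :=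
  sSup {c | ∃ W : Submodule F (Fin n → F),
    IsIndep (strongPow G n) (W : Set (Fin n → F)) ∧ Nat.card W = c}

/-!
Put `T = {0} ∪ S`. If `x ∈ Tᵐ` is nonzero, then `(x, Ax)` and `0` are distinct and every
coordinate of `(x, Ax)` lying in `T` would make them adjacent, so some `(Ax)ᵢ` avoids `T`.
Hence `P(x) = ∏ᵢ ∏_{u ∉ T} ((Ax)ᵢ - u)`, of degree at most `r (q - 1 - s)`, vanishes on
`Tᵐ ∖ {0}` but not at `0`. By the combinatorial Nullstellensatz such a polynomial has degree
at least `(|T| - 1) m = s m`.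
-/

open Finset Matrix

namespace MvPolynomial

variable {R σ : Type*} [CommRing R]

theorem degree_prod_X_sub_C [Nontrivial R] (m : MonomialOrder σ) (j : σ) (s : Finset R) :
    m.degree (∏ a ∈ s, (X j - C a)) = Finsupp.single j #s := by
  rw [m.degree_prod_of_regular fun a _ => by
    simp only [(m.monic_X_sub_C j a).leadingCoeff_eq_one, isRegular_one]]
  simp [m.degree_X_sub_C]

variable [Fintype σ]

theorem degree_prod_prod_X_sub_C [Nontrivial R] (m : MonomialOrder σ) (s : σ → Finset R) :
    m.degree (∏ j, ∏ a ∈ s j, (X j - C a)) = ∑ j, Finsupp.single j #(s j) := by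
  rw [m.degree_prod_of_regular fun j _ => by
    simp only [(MonomialOrder.Monic.prod fun a _ => m.monic_X_sub_C j a).leadingCoeff_eq_one,
      isRegular_one]]
  simp only [degree_prod_X_sub_C]

theorem coeff_prod_prod_X_sub_C [Nontrivial R] (s : σ → Finset R) :
    (∏ j, ∏ a ∈ s j, (X j - C a)).coeff (∑ j, Finsupp.single j #(s j)) = 1 := by
  let _ : LinearOrder σ := WellOrderingRel.isWellOrder.linearOrder
  rw [← degree_prod_prod_X_sub_C MonomialOrder.degLex]
  exact (MonomialOrder.Monic.prod fun j _ => .prod fun a _ =>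
    MonomialOrder.degLex.monic_X_sub_C j a).coeff_degree

theorem totalDegree_prod_prod_X_sub_C [Nontrivial R] (s : σ → Finset R) :
    (∏ j, ∏ a ∈ s j, (X j - C a)).totalDegree = ∑ j, #(s j) := by
  let _ : LinearOrder σ := WellOrderingRel.isWellOrder.linearOrder
  rw [← degree_degLexDegree, degree_prod_prod_X_sub_C]
  simp only [map_sum, Finsupp.degree_single]

theorem sum_card_sub_one_le_totalDegree [IsDomain R] (T : σ → Finset R) (hT : ∀ j, 0 ∈ T j)
    (P : MvPolynomial σ R) (hP0 : eval 0 P ≠ 0)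
    (hP : ∀ x, (∀ j, x j ∈ T j) → x ≠ 0 → eval x P = 0) :
    ∑ j, (#(T j) - 1) ≤ P.totalDegree := by
  classical
  by_contra! hlt
  set δ : MvPolynomial σ R := ∏ j, ∏ a ∈ (T j).erase 0, (X j - C a)
  set t : σ →₀ ℕ := ∑ j, Finsupp.single j #((T j).erase 0)
  have hcard : ∑ j, #((T j).erase 0) = ∑ j, (#(T j) - 1) := by
    simp only [card_erase_of_mem (hT _)]
  have htj : ∀ j, t j < #(T j) := by
    intro j
    simpa [t, Finsupp.finsetSum_apply, Finsupp.single_apply] using card_erase_lt_of_mem (hT j)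
  have htdeg : t.degree = ∑ j, (#(T j) - 1) := by
    simp only [t, map_sum, Finsupp.degree_single, hcard]
  have hδ_eval : ∀ x, eval x δ = ∏ j, ∏ a ∈ (T j).erase 0, (x j - a) := by simp [δ]
  -- `f` vanishes on the whole grid, yet its coefficient at the top-degree monomial `t` is `-P(0)`.
  set f := eval 0 δ • P - eval 0 P • δ
  have hf_coeff : f.coeff t ≠ 0 := by
    rw [coeff_sub, coeff_smul, coeff_smul, coeff_prod_prod_X_sub_C,
      coeff_eq_zero_of_totalDegree_lt (hlt.trans_eq htdeg.symm)]
    simpa using hP0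
  have hf_deg : f.totalDegree = t.degree := by
    refine le_antisymm ?_ (le_totalDegree (mem_support_iff.2 hf_coeff))
    refine (totalDegree_sub _ _).trans (max_le ?_ ?_)
    · exact (totalDegree_smul_le _ _).trans (hlt.le.trans_eq htdeg.symm)
    · exact (totalDegree_smul_le _ _).trans
        (by rw [totalDegree_prod_prod_X_sub_C, hcard, htdeg])
  obtain ⟨x, hxT, hfx⟩ :=
    combinatorial_nullstellensatz_exists_eval_nonzero f t hf_coeff hf_deg T htj
  apply hfx
  by_cases hx0 : x = 0
  · simp only [f, hx0, map_sub, smul_eval, mul_comm, sub_self]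
  obtain ⟨j, hj⟩ := Function.ne_iff.1 hx0
  have hδx : eval x δ = 0 := by
    rw [hδ_eval]
    exact prod_eq_zero (mem_univ j) (prod_eq_zero (mem_erase.2 ⟨hj, hxT j⟩) (sub_self _))
  simp [f, hP x hxT hx0, hδx]

theorem totalDegree_prod_prod_toMvPolynomial_sub_C_le {ι : Type*} [Fintype ι]
    (A : Matrix ι σ R) (U : Finset R) :
    (∏ i, ∏ u ∈ U, (A.toMvPolynomial i - C u)).totalDegree ≤ Fintype.card ι * #U := by
  calc (∏ i, ∏ u ∈ U, (A.toMvPolynomial i - C u)).totalDegree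
      ≤ ∑ i, ∑ u ∈ U, (A.toMvPolynomial i - C u).totalDegree :=
        (totalDegree_finsetProd _ _).trans (sum_le_sum fun _ _ => totalDegree_finsetProd _ _)
    _ ≤ ∑ _i : ι, ∑ _u ∈ U, 1 := by
        gcongr with i _ u _
        exact (totalDegree_sub_C_le _ _).trans (A.toMvPolynomial_totalDegree_le i)
    _ = Fintype.card ι * #U := by simp

end MvPolynomial

theorem eq_zero_or_cayley_adj_zero {F : Type*} [Field F] {S : Set F} {u : F}
    (hu : u ∈ insert 0 S) : u = 0 ∨ (cayley S).Adj u 0 := by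
  by_cases h : u = 0
  · exact Or.inl h
  · exact Or.inr ⟨h, Or.inl (by simpa [h] using hu)⟩

theorem exists_mulVec_notMem_of_isIndep {F : Type*} [Field F] {S : Set F} {m r : ℕ}
    {A : Matrix (Fin r) (Fin m) F}
    (hind : IsIndep (strongPow (cayley S) (m + r))
      {z : Fin (m + r) → F | ∃ x : Fin m → F, z = Fin.append x (A *ᵥ x)})
    {x : Fin m → F} (hx : ∀ j, x j ∈ insert 0 S) (hx0 : x ≠ 0) :
    ∃ i, (A *ᵥ x) i ∉ insert 0 S := by
  by_contra! hAx
  refine hind _ ⟨x, rfl⟩ _ ⟨0, rfl⟩ ⟨fun h => hx0 (funext fun j => ?_), ?_⟩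
  · simpa using congrFun h (Fin.castAdd r j)
  · simp only [Fin.forall_fin_add, Fin.append_left, Fin.append_right, mulVec_zero,
      Pi.zero_apply]
    exact ⟨fun j => eq_zero_or_cayley_adj_zero (hx j),
      fun i => eq_zero_or_cayley_adj_zero (hAx i)⟩

theorem stmt3_general {F : Type*} [Field F] [Fintype F] [DecidableEq F]
    (S : Finset F) (h0 : (0:F) ∉ S)
    (m r : ℕ) (A : Matrix (Fin r) (Fin m) F)
    (hind : IsIndep (strongPow (cayley (S : Set F)) (m + r))
      {z : Fin (m + r) → F | ∃ x : Fin m → F, z = Fin.append x (A.mulVec x)}) :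
    S.card * m ≤ r * (Fintype.card F - 1 - S.card) := by
  set T := insert 0 S
  have hT : #T = #S + 1 := card_insert_of_notMem h0
  set P : MvPolynomial (Fin m) F := ∏ i, ∏ u ∈ Tᶜ, (A.toMvPolynomial i - C u)
  have hP_eval : ∀ x, eval x P = ∏ i, ∏ u ∈ Tᶜ, ((A *ᵥ x) i - u) := by
    simp [P, toMvPolynomial_eval_eq_apply]
  have hP0 : eval 0 P ≠ 0 := by
    simp only [hP_eval, mulVec_zero, Pi.zero_apply, zero_sub, prod_ne_zero_iff, neg_ne_zero]
    exact fun i _ u hu h => mem_compl.1 hu (h ▸ mem_insert_self 0 S)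
  have hP : ∀ x, (∀ j, x j ∈ T) → x ≠ 0 → eval x P = 0 := by
    intro x hx hx0
    obtain ⟨i, hi⟩ := exists_mulVec_notMem_of_isIndep hind (by simpa [T] using hx) hx0
    rw [hP_eval]
    exact prod_eq_zero (mem_univ i) (prod_eq_zero (by simpa [T] using hi) (sub_self _))
  calc #S * m = ∑ _j : Fin m, (#T - 1) := by simp [hT, mul_comm]
    _ ≤ P.totalDegree :=
      sum_card_sub_one_le_totalDegree (fun _ => T) (fun _ => mem_insert_self 0 S) P hP0 hP
    _ ≤ r * #Tᶜ := by simpa using totalDegree_prod_prod_toMvPolynomial_sub_C_le A Tᶜ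
    _ = r * (Fintype.card F - 1 - #S) := by
      rw [card_compl, hT, Nat.sub_sub, add_comm]

theorem stmt3 {F : Type*} [Field F] [Fintype F] [DecidableEq F]
    (S : Finset F) (hS : ∀ s ∈ S, -s ∈ S) (h0 : (0:F) ∉ S)
    (m r : ℕ) (A : Matrix (Fin r) (Fin m) F)
    (hind : IsIndep (strongPow (cayley (S : Set F)) (m + r))
      {z : Fin (m + r) → F | ∃ x : Fin m → F, z = Fin.append x (A.mulVec x)}) :
    S.card * m ≤ r * (Fintype.card F - 1 - S.card) :=
  stmt3_general S h0 m r A hind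
end

section
/- Let q be a prime power, S ⊆ F_q \ {0} symmetric, and G = Γ(F_q, S). Then for every n ≥ 1, every independent set of G^n that is a linear subspace of F_q^n has size at most q^{n(1 − |S|/(q−1))}. Consequently the linear Shannon capacity Θ_lin(G) = sup_n α_lin(G^n)^{1/n} is at most q^{1 − |S|/(q−1)}. -/
open SimpleGraph MvPolynomial

/-!
Let `W ≤ F^n` be a `k`-dimensional independent subspace and `T = F \ (S ∪ {0})`. A nonzero
`w ∈ W` is not adjacent to `0`, so some coordinate `w i` lies in `T`. Writing `W ≅ F^k` through a
basis, the polynomial `∏ i, ∏ τ ∈ T, (w i - τ)` in the `k` coordinates therefore vanishes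
everywhere except at `0`, so its sum over `F^k` is nonzero. By the Chevalley–Warning sum
lemma its degree, at most `n * |T| = n * (q - 1 - |S|)`, is then at least `k * (q - 1)`.
-/

open Finset

theorem totalDegree_sum_C_mul_X_le {σ R : Type*} [CommSemiring R] (s : Finset σ) (a : σ → R) :
    (∑ j ∈ s, C (a j) * X j).totalDegree ≤ 1 :=
  totalDegree_finsetSum_le fun j _ => by
    rw [C_mul_X_eq_monomial]
    exact (totalDegree_monomial_le _ _).trans (by simp)

theorem card_sub_one_mul_finrank_le_of_exists_apply_mem
    {F V ι : Type*} [Field F] [Fintype F] [AddCommGroup V] [Module F V] [Module.Finite F V]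
    [Fintype ι] (φ : ι → Module.Dual F V) (T : Finset F) (hT : (0 : F) ∉ T)
    (hcover : ∀ v : V, v ≠ 0 → ∃ i, φ i v ∈ T) :
    (Fintype.card F - 1) * Module.finrank F V ≤ Fintype.card ι * #T := by
  classical
  set k := Module.finrank F V
  let b := Module.finBasis F V
  let L : ι → MvPolynomial (Fin k) F := fun i => ∑ j, C (φ i (b j)) * X j
  have eval_L (x : Fin k → F) (i : ι) : eval x (L i) = φ i (b.equivFun.symm x) := by
    simp [L, Module.Basis.equivFun_symm_apply, mul_comm]
  let f := ∏ i, ∏ τ ∈ T, (L i - C τ)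
  have hdeg : f.totalDegree ≤ Fintype.card ι * #T :=
    calc f.totalDegree ≤ ∑ i, ∑ τ ∈ T, (L i - C τ).totalDegree :=
          (totalDegree_finsetProd _ _).trans (sum_le_sum fun i _ => totalDegree_finsetProd _ _)
      _ ≤ ∑ i : ι, ∑ τ ∈ T, 1 := by
          gcongr with i _ τ _
          exact (totalDegree_sub_C_le _ _).trans (totalDegree_sum_C_mul_X_le _ _)
      _ = Fintype.card ι * #T := by simp
  have eval_zero : eval 0 f ≠ 0 := by
    simp only [f, map_prod, map_sub, eval_L, eval_C, map_zero, zero_sub]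
    exact prod_ne_zero_iff.mpr fun i _ => prod_ne_zero_iff.mpr fun τ hτ =>
      neg_ne_zero.mpr (ne_of_mem_of_not_mem hτ hT)
  have eval_ne_zero (x : Fin k → F) (hx : x ≠ 0) : eval x f = 0 := by
    obtain ⟨i, hi⟩ := hcover _ (b.equivFun.symm.map_ne_zero_iff.mpr hx)
    simp only [f, map_prod, map_sub, eval_L, eval_C]
    exact prod_eq_zero (mem_univ i) (prod_eq_zero hi (sub_self _))
  by_contra! hlt
  refine eval_zero ?_
  rw [← sum_eq_single_of_mem 0 (mem_univ _) fun x _ hx => eval_ne_zero x hx]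
  exact sum_eval_eq_zero f (by rw [Fintype.card_fin]; omega)

theorem exists_apply_ne_zero_notMem_of_isIndep {F : Type*} [Field F] {S : Set F} {n : ℕ}
    {W : Submodule F (Fin n → F)} (hW : IsIndep (strongPow (cayley S) n) W) {w : Fin n → F}
    (hw : w ∈ W) (hw0 : w ≠ 0) : ∃ i, w i ≠ 0 ∧ w i ∉ S := by
  by_contra! h
  refine hW w hw 0 W.zero_mem ⟨hw0, fun i => ?_⟩
  by_cases hi : w i = 0
  · exact Or.inl hi
  · exact Or.inr ⟨hi, Or.inl (by simpa using h i hi)⟩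

theorem natCard_le_rpow_of_isIndep {F : Type*} [Field F] [Fintype F] {S : Finset F}
    (h0 : (0 : F) ∉ S) {n : ℕ} {W : Submodule F (Fin n → F)}
    (hW : IsIndep (strongPow (cayley (S : Set F)) n) W) :
    (Nat.card W : ℝ) ≤
      (Fintype.card F : ℝ) ^ ((n : ℝ) * (1 - (#S : ℝ) / ((Fintype.card F : ℝ) - 1))) := by
  classical
  set T : Finset F := (insert 0 S)ᶜ
  have hcover (w : W) (hw : w ≠ 0) : ∃ i, (LinearMap.proj i ∘ₗ W.subtype) w ∈ T := by
    obtain ⟨i, hi0, hiS⟩ :=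
      exists_apply_ne_zero_notMem_of_isIndep hW w.2 (by simpa using hw)
    exact ⟨i, by simpa [T, hi0] using hiS⟩
  have hq : 1 < Fintype.card F := Fintype.one_lt_card
  have hT : (#T : ℝ) = Fintype.card F - 1 - #S := by
    have : #T + (#S + 1) = Fintype.card F := by
      rw [← card_insert_of_notMem h0, card_compl_add_card]
    rw [← this]
    push_cast
    ring
  have hkey :
      ((Fintype.card F : ℝ) - 1) * Module.finrank F W ≤ n * (Fintype.card F - 1 - #S) := by
    have := card_sub_one_mul_finrank_le_of_exists_apply_mem _ T (by simp [T]) hcover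
    rw [← hT, ← Nat.cast_one, ← Nat.cast_sub hq.le]
    rw [Fintype.card_fin] at this
    exact_mod_cast this
  have hq' : (0 : ℝ) < Fintype.card F - 1 := by rw [sub_pos]; exact_mod_cast hq
  rw [Module.natCard_eq_pow_finrank (K := F), Nat.card_eq_fintype_card, Nat.cast_pow,
    ← Real.rpow_natCast]
  refine Real.rpow_le_rpow_of_exponent_le (by exact_mod_cast hq.le) ?_
  rw [one_sub_div hq'.ne', ← mul_div_assoc, le_div_iff₀ hq']
  linarith

theorem exists_isIndep_natCard_eq_alphaLin {F : Type*} [Field F] [Fintype F]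
    (G : SimpleGraph F) (n : ℕ) :
    ∃ W : Submodule F (Fin n → F), IsIndep (strongPow G n) W ∧ Nat.card W = alphaLin G n := by
  refine Nat.sSup_mem (s := {c | ∃ W : Submodule F (Fin n → F),
    IsIndep (strongPow G n) (W : Set (Fin n → F)) ∧ Nat.card W = c})
    ⟨_, ⊥, fun x hx y hy hxy => hxy.1 (by simp_all), rfl⟩ ⟨Nat.card (Fin n → F), ?_⟩
  rintro _ ⟨W, -, rfl⟩
  exact Nat.card_le_card_of_injective _ Subtype.val_injective

theorem stmt4_general {F : Type*} [Field F] [Fintype F]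
    (S : Finset F) (h0 : (0:F) ∉ S) :
    (∀ n : ℕ, 1 ≤ n → ∀ W : Submodule F (Fin n → F),
      IsIndep (strongPow (cayley (S : Set F)) n) (W : Set (Fin n → F)) →
      (Nat.card W : ℝ) ≤ (Fintype.card F : ℝ) ^
        ((n : ℝ) * (1 - (S.card : ℝ) / ((Fintype.card F : ℝ) - 1)))) ∧
    (⨆ n : ℕ, ((alphaLin (cayley (S : Set F)) (n + 1) : ℝ) ^ ((1 : ℝ) / ((n : ℝ) + 1)))) ≤
      (Fintype.card F : ℝ) ^ (1 - (S.card : ℝ) / ((Fintype.card F : ℝ) - 1)) := by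
  refine ⟨fun n _ W hW => natCard_le_rpow_of_isIndep h0 hW, ciSup_le fun n => ?_⟩
  obtain ⟨W, hW, hcard⟩ := exists_isIndep_natCard_eq_alphaLin (cayley (S : Set F)) (n + 1)
  set β := 1 - (#S : ℝ) / ((Fintype.card F : ℝ) - 1)
  calc (alphaLin (cayley (S : Set F)) (n + 1) : ℝ) ^ (1 / ((n : ℝ) + 1))
      ≤ ((Fintype.card F : ℝ) ^ ((n + 1 : ℕ) * β)) ^ (1 / ((n : ℝ) + 1)) := by
        rw [← hcard]
        gcongr
        exact natCard_le_rpow_of_isIndep h0 hW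
    _ = (Fintype.card F : ℝ) ^ β := by
        rw [← Real.rpow_mul (Nat.cast_nonneg _)]
        congr 1
        push_cast
        field_simp

theorem stmt4 {F : Type*} [Field F] [Fintype F] [DecidableEq F]
    (S : Finset F) (hS : ∀ s ∈ S, -s ∈ S) (h0 : (0:F) ∉ S) :
    (∀ n : ℕ, 1 ≤ n → ∀ W : Submodule F (Fin n → F),
      IsIndep (strongPow (cayley (S : Set F)) n) (W : Set (Fin n → F)) →
      (Nat.card W : ℝ) ≤ (Fintype.card F : ℝ) ^
        ((n : ℝ) * (1 - (S.card : ℝ) / ((Fintype.card F : ℝ) - 1)))) ∧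
    (⨆ n : ℕ, ((alphaLin (cayley (S : Set F)) (n + 1) : ℝ) ^ ((1 : ℝ) / ((n : ℝ) + 1)))) ≤
      (Fintype.card F : ℝ) ^ (1 - (S.card : ℝ) / ((Fintype.card F : ℝ) - 1)) :=
  stmt4_general S h0
end

section
/- Every independent set in the strong power C_5^n that is an F_5-linear subspace of F_5^n has size at most 5^{n/2}. Hence the linear Shannon capacity of C_5 satisfies Θ_lin(C_5) ≤ √5. -/
open SimpleGraph MvPolynomial

instance : Fact (Nat.Prime 5) := ⟨by norm_num⟩

/-!
A nonzero vector `w` of an independent subspace `W` is not adjacent to `0`, so some coordinate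
`w i` lies in the set `R` of nonzero non-neighbours of `0`; for `C₅`, `R = {2, 3}`. Parametrizing
`W` linearly by `K^d`, the polynomial `∏ i, ∏ a ∈ R, (w(z) i - a)` of degree `n * #R` vanishes
exactly off `z = 0`, so its sum over `K^d` is nonzero, and the Chevalley–Warning sum lemma
forces `(q - 1) * d ≤ n * #R`. For `C₅` this is `4d ≤ 2n`, i.e. `|W| = 5^d ≤ 5^(n/2)`.
-/

open Finset

theorem card_sub_one_mul_le_of_forall_exists_apply_mem {K σ ι : Type*} [Field K] [Fintype K]
    [Fintype σ] [DecidableEq σ] [Fintype ι] (L : (σ → K) →ₗ[K] (ι → K)) (R : Finset K)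
    (hR : 0 ∉ R) (hL : ∀ z ≠ 0, ∃ i, L z i ∈ R) :
    (Fintype.card K - 1) * Fintype.card σ ≤ Fintype.card ι * #R := by
  by_contra! hlt
  let ℓ : ι → MvPolynomial σ K := fun i => ∑ j, C (L (Pi.single j 1) i) * X j
  have eval_ℓ : ∀ z i, eval z (ℓ i) = L z i := by
    intro z i
    conv_rhs => rw [pi_eq_sum_univ' z]
    simp [ℓ, Finset.sum_apply, mul_comm]
  have totalDegree_ℓ : ∀ i, (ℓ i).totalDegree ≤ 1 := fun i =>
    (totalDegree_finsetSum _ _).trans <| Finset.sup_le fun j _ =>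
      (totalDegree_mul _ _).trans <| by rw [totalDegree_C, totalDegree_X]
  let p : MvPolynomial σ K := ∏ i, ∏ a ∈ R, (ℓ i - C a)
  have eval_p : ∀ z, eval z p = ∏ i, ∏ a ∈ R, (L z i - a) := by simp [p, eval_ℓ]
  have totalDegree_p : p.totalDegree ≤ Fintype.card ι * #R := by
    calc p.totalDegree ≤ ∑ i, ∑ a ∈ R, (ℓ i - C a).totalDegree :=
          (totalDegree_finsetProd _ _).trans <| sum_le_sum fun i _ =>
            totalDegree_finsetProd _ _
      _ ≤ ∑ i : ι, ∑ a ∈ R, 1 := by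
          gcongr with i _ a _
          exact (totalDegree_sub_C_le _ _).trans (totalDegree_ℓ i)
      _ = Fintype.card ι * #R := by simp
  have sum_eq_zero : ∑ z, eval z p = 0 := sum_eval_eq_zero p (totalDegree_p.trans_lt hlt)
  rw [sum_eq_single_of_mem 0 (mem_univ _) fun z _ hz => ?_] at sum_eq_zero
  · simp only [eval_p, map_zero, Pi.zero_apply, zero_sub] at sum_eq_zero
    exact prod_ne_zero_iff.2 (fun i _ => prod_ne_zero_iff.2 fun a ha =>
      neg_ne_zero.2 (ne_of_mem_of_not_mem ha hR)) sum_eq_zero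
  · obtain ⟨i, hi⟩ := hL z hz
    rw [eval_p]
    exact prod_eq_zero (mem_univ i) (prod_eq_zero hi (sub_self _))

theorem Submodule.card_sub_one_mul_finrank_le {K ι : Type*} [Field K] [Fintype K] [Fintype ι]
    (W : Submodule K (ι → K)) (R : Finset K) (hR : 0 ∉ R)
    (hW : ∀ w ∈ W, w ≠ 0 → ∃ i, w i ∈ R) :
    (Fintype.card K - 1) * Module.finrank K W ≤ Fintype.card ι * #R := by
  let L := W.subtype ∘ₗ (Module.finBasis K W).equivFun.symm.toLinearMap
  have hL : Function.Injective L :=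
    W.injective_subtype.comp (Module.finBasis K W).equivFun.symm.injective
  have h := card_sub_one_mul_le_of_forall_exists_apply_mem L R hR fun z hz =>
    hW (L z) (SetLike.coe_mem _) ((map_ne_zero_iff L hL).2 hz)
  rwa [Fintype.card_fin] at h

theorem exists_apply_ne_zero_not_adj_zero_of_isIndep {V : Type*} [Zero V] {G : SimpleGraph V}
    {n : ℕ} {I : Set (Fin n → V)} (hI : IsIndep (strongPow G n) I) (h0 : 0 ∈ I)
    {w : Fin n → V} (hw : w ∈ I) (hw0 : w ≠ 0) : ∃ i, w i ≠ 0 ∧ ¬ G.Adj (w i) 0 := by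
  by_contra! h
  exact hI w hw 0 h0 ⟨hw0, fun i => (em (w i = 0)).imp_right (h i)⟩

theorem card_sub_one_mul_finrank_le_of_isIndep {K : Type*} [Field K] [Fintype K]
    (G : SimpleGraph K) {n : ℕ} (W : Submodule K (Fin n → K))
    (hW : IsIndep (strongPow G n) (W : Set (Fin n → K))) (R : Finset K) (hR : 0 ∉ R)
    (hGR : ∀ a, a ≠ 0 → ¬ G.Adj a 0 → a ∈ R) :
    (Fintype.card K - 1) * Module.finrank K W ≤ n * #R := by
  simpa using W.card_sub_one_mul_finrank_le R hR fun w hw hw0 =>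
    (exists_apply_ne_zero_not_adj_zero_of_isIndep hW W.zero_mem hw hw0).imp fun i hi =>
      hGR _ hi.1 hi.2

theorem mem_of_not_adj_zero_cayley_five (a : ZMod 5) (ha : a ≠ 0)
    (hadj : ¬ (cayley ({1, 4} : Set (ZMod 5))).Adj a 0) : a ∈ ({2, 3} : Finset (ZMod 5)) := by
  simp only [cayley, sub_zero, zero_sub, Set.mem_insert_iff, Set.mem_singleton_iff] at hadj
  revert a
  decide

theorem two_mul_finrank_le_of_isIndep_cayley_five {n : ℕ}
    (W : Submodule (ZMod 5) (Fin n → ZMod 5))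
    (hW : IsIndep (strongPow (cayley ({1, 4} : Set (ZMod 5))) n) (W : Set (Fin n → ZMod 5))) :
    2 * Module.finrank (ZMod 5) W ≤ n := by
  have h := card_sub_one_mul_finrank_le_of_isIndep _ W hW {2, 3} (by decide)
    mem_of_not_adj_zero_cayley_five
  rw [ZMod.card, show #({2, 3} : Finset (ZMod 5)) = 2 from rfl] at h
  omega

theorem card_le_of_isIndep_cayley_five {n : ℕ} (W : Submodule (ZMod 5) (Fin n → ZMod 5))
    (hW : IsIndep (strongPow (cayley ({1, 4} : Set (ZMod 5))) n) (W : Set (Fin n → ZMod 5))) :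
    (Nat.card W : ℝ) ≤ (5 : ℝ) ^ ((n : ℝ) / 2) := by
  have hdim : (2 * Module.finrank (ZMod 5) W : ℝ) ≤ n := by
    exact_mod_cast two_mul_finrank_le_of_isIndep_cayley_five W hW
  rw [Module.natCard_eq_pow_finrank (K := ZMod 5), Nat.card_zmod, Nat.cast_pow,
    ← Real.rpow_natCast]
  exact Real.rpow_le_rpow_of_exponent_le (by norm_num) (by linarith)

theorem exists_isIndep_card_eq_alphaLin {F : Type*} [Field F] [Fintype F] (G : SimpleGraph F)
    (n : ℕ) : ∃ W : Submodule F (Fin n → F),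
      IsIndep (strongPow G n) (W : Set (Fin n → F)) ∧ Nat.card W = alphaLin G n := by
  refine Nat.sSup_mem (s := {c | ∃ W : Submodule F (Fin n → F),
    IsIndep (strongPow G n) (W : Set (Fin n → F)) ∧ Nat.card W = c})
    ⟨1, ⊥, ?_, by simp⟩ ⟨Nat.card (Fin n → F), ?_⟩
  · intro x hx y hy hxy
    simp only [SetLike.mem_coe, Submodule.mem_bot] at hx hy
    exact hxy.ne (hx.trans hy.symm)
  · rintro c ⟨W, -, rfl⟩
    exact Nat.card_le_card_of_injective _ W.injective_subtype

theorem Real.rpow_one_div_le_sqrt {x b m : ℝ} (hx : 0 ≤ x) (hb : 0 ≤ b) (hm : 0 < m)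
    (h : x ≤ b ^ (m / 2)) : x ^ (1 / m) ≤ √b := by
  calc x ^ (1 / m) ≤ (b ^ (m / 2)) ^ (1 / m) := by gcongr
    _ = √b := by rw [← Real.rpow_mul hb, Real.sqrt_eq_rpow]; field_simp

theorem stmt9 :
    (∀ n : ℕ, ∀ W : Submodule (ZMod 5) (Fin n → ZMod 5),
      IsIndep (strongPow (cayley ({1, 4} : Set (ZMod 5))) n) (W : Set (Fin n → ZMod 5)) →
      (Nat.card W : ℝ) ≤ (5 : ℝ) ^ ((n : ℝ) / 2)) ∧
    (⨆ n : ℕ, ((alphaLin (cayley ({1, 4} : Set (ZMod 5))) (n + 1) : ℝ) ^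
        ((1 : ℝ) / ((n : ℝ) + 1)))) ≤ Real.sqrt 5 := by
  refine ⟨fun n W hW => card_le_of_isIndep_cayley_five W hW, ciSup_le fun n => ?_⟩
  obtain ⟨W, hW, hcard⟩ :=
    exists_isIndep_card_eq_alphaLin (cayley ({1, 4} : Set (ZMod 5))) (n + 1)
  refine Real.rpow_one_div_le_sqrt (Nat.cast_nonneg _) (by norm_num) (by positivity) ?_
  rw [← hcard]
  exact_mod_cast card_le_of_isIndep_cayley_five W hW
end

section
/- Let q ≡ 1 (mod 4) be a prime power and P_q the Paley graph on F_q. For any quadratic non-residue a, the set {(x, a·x) : x ∈ F_q} is an independent set of size q in the strong square P_q^2. Hence α_lin(P_q^2) ≥ q and Θ_lin(P_q) ≥ √q. -/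
open SimpleGraph MvPolynomial

/-- The Paley graph on a finite field: `u ~ v` iff `u - v` is a nonzero square. -/
def paley (F : Type*) [Field F] : SimpleGraph F := cayley {x : F | x ≠ 0 ∧ IsSquare x}


/-!
If `-1` is a square (i.e. `q ≡ 1 mod 4`) and `a` is not, two distinct points `(x, a x)` and
`(y, a y)` of the line can only be adjacent in the strong square if `x - y` and `a (x - y)` are
both nonzero squares, which would make `a` a square. The line is a one-dimensional subspace of
size `q`, so `α_lin(P_q^2) ≥ q`, and `Θ_lin(P_q) ≥ α_lin(P_q^2)^{1/2} ≥ √q`.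
-/

section Paley

variable {F : Type*} [Field F]

theorem paley_adj_isSquare_sub (hneg : IsSquare (-1 : F)) {u v : F} (h : (paley F).Adj u v) :
    u - v ≠ 0 ∧ IsSquare (u - v) := by
  obtain ⟨hne, h | h⟩ := h
  · exact h
  · refine ⟨sub_ne_zero.mpr hne, ?_⟩
    rw [← neg_sub, neg_eq_neg_one_mul]
    exact hneg.mul h.2

theorem isIndep_strongPow_two_paley_line (hneg : IsSquare (-1 : F)) {a : F} (ha : ¬IsSquare a) :
    IsIndep (strongPow (paley F) 2) {z : Fin 2 → F | ∃ x : F, z = ![x, a * x]} := by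
  have ha0 : a ≠ 0 := by rintro rfl; exact ha IsSquare.zero
  rintro _ ⟨x, rfl⟩ _ ⟨y, rfl⟩ ⟨hne, hadj⟩
  have hxy : x ≠ y := by rintro rfl; exact hne rfl
  have haxy : a * x ≠ a * y := (mul_right_injective₀ ha0).ne hxy
  obtain ⟨hd, hsq⟩ := paley_adj_isSquare_sub hneg ((hadj 0).resolve_left hxy)
  obtain ⟨-, hsq'⟩ := paley_adj_isSquare_sub hneg ((hadj 1).resolve_left haxy)
  apply ha
  have : a = (a * x - a * y) / (x - y) := by field_simp
  rw [this]
  exact hsq'.div hsq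

theorem span_singleton_eq_line (a : F) :
    ((F ∙ ![1, a] : Submodule F (Fin 2 → F)) : Set (Fin 2 → F)) =
      {z : Fin 2 → F | ∃ x : F, z = ![x, a * x]} := by
  ext z
  simp only [SetLike.mem_coe, Submodule.mem_span_singleton, Set.mem_ofPred_eq]
  refine exists_congr fun x => ?_
  rw [eq_comm]
  constructor <;> rintro rfl <;> ext i <;> fin_cases i <;> simp [mul_comm]

end Paley

theorem natCard_line {R : Type*} [Mul R] (a : R) :
    Nat.card {z : Fin 2 → R | ∃ x : R, z = ![x, a * x]} = Nat.card R := by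
  have hline : {z : Fin 2 → R | ∃ x : R, z = ![x, a * x]} = Set.range fun x => ![x, a * x] := by
    ext z
    simp [eq_comm]
  rw [hline, Nat.card_range_of_injective]
  intro x y h
  simpa using congr_fun h 0

theorem Submodule.natCard_le_card_pow {R : Type*} [Semiring R] [Fintype R] {n : ℕ}
    (W : Submodule R (Fin n → R)) : Nat.card W ≤ Fintype.card R ^ n :=
  calc Nat.card W ≤ Nat.card (Fin n → R) := Nat.card_le_card_of_injective _ Subtype.val_injective
    _ = Fintype.card R ^ n := by simp

section AlphaLin

variable {F : Type*} [Field F] [Fintype F] (G : SimpleGraph F)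

theorem alphaLin_le_card_pow (n : ℕ) : alphaLin G n ≤ Fintype.card F ^ n :=
  csSup_le' fun _ ⟨W, _, hc⟩ => hc ▸ W.natCard_le_card_pow

theorem card_le_alphaLin {n : ℕ} (W : Submodule F (Fin n → F))
    (hW : IsIndep (strongPow G n) (W : Set (Fin n → F))) : Nat.card W ≤ alphaLin G n :=
  le_csSup ⟨_, fun _ ⟨W', _, hc⟩ => hc ▸ W'.natCard_le_card_pow⟩ ⟨W, hW, rfl⟩

theorem alphaLin_rpow_le_card (n : ℕ) :
    (alphaLin G (n + 1) : ℝ) ^ ((1 : ℝ) / ((n : ℝ) + 1)) ≤ Fintype.card F := by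
  have hα : (alphaLin G (n + 1) : ℝ) ≤ (Fintype.card F : ℝ) ^ (n + 1) := by
    exact_mod_cast alphaLin_le_card_pow G (n + 1)
  calc (alphaLin G (n + 1) : ℝ) ^ ((1 : ℝ) / ((n : ℝ) + 1))
      ≤ ((Fintype.card F : ℝ) ^ (n + 1)) ^ (((n + 1 : ℕ) : ℝ)⁻¹) := by
        rw [one_div, Nat.cast_succ]
        exact Real.rpow_le_rpow (by positivity) hα (by positivity)
    _ = Fintype.card F := Real.pow_rpow_inv_natCast (by positivity) n.succ_ne_zero

theorem sqrt_alphaLin_two_le_iSup :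
    Real.sqrt (alphaLin G 2) ≤
      ⨆ n : ℕ, ((alphaLin G (n + 1) : ℝ) ^ ((1 : ℝ) / ((n : ℝ) + 1))) := by
  have hbdd : BddAbove (Set.range fun n : ℕ =>
      (alphaLin G (n + 1) : ℝ) ^ ((1 : ℝ) / ((n : ℝ) + 1))) :=
    ⟨Fintype.card F, Set.forall_mem_range.mpr (alphaLin_rpow_le_card G)⟩
  refine le_of_eq_of_le ?_ (le_ciSup hbdd 1)
  rw [Real.sqrt_eq_rpow]
  norm_num

end AlphaLin

theorem stmt12_general {F : Type*} [Field F] [Fintype F] (hq : Fintype.card F % 4 = 1)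
    (a : F) (ha : ¬ IsSquare a) :
    IsIndep (strongPow (paley F) 2) {z : Fin 2 → F | ∃ x : F, z = ![x, a * x]} ∧
    Nat.card {z : Fin 2 → F | ∃ x : F, z = ![x, a * x]} = Fintype.card F ∧
    Fintype.card F ≤ alphaLin (paley F) 2 ∧
    Real.sqrt (Fintype.card F) ≤
      ⨆ n : ℕ, ((alphaLin (paley F) (n + 1) : ℝ) ^ ((1 : ℝ) / ((n : ℝ) + 1))) := by
  have hneg : IsSquare (-1 : F) := FiniteField.isSquare_neg_one_iff.mpr (by omega)
  have hindep := isIndep_strongPow_two_paley_line hneg ha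
  have hcard : Nat.card {z : Fin 2 → F | ∃ x : F, z = ![x, a * x]} = Fintype.card F := by
    rw [natCard_line, Nat.card_eq_fintype_card]
  have hα : Fintype.card F ≤ alphaLin (paley F) 2 := by
    rw [← hcard, ← span_singleton_eq_line]
    exact card_le_alphaLin _ _ (span_singleton_eq_line a ▸ hindep)
  refine ⟨hindep, hcard, hα, ?_⟩
  calc Real.sqrt (Fintype.card F) ≤ Real.sqrt (alphaLin (paley F) 2) := by gcongr
    _ ≤ _ := sqrt_alphaLin_two_le_iSup _

theorem stmt12 {F : Type*} [Field F] [Fintype F] (hq : Fintype.card F % 4 = 1)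
    (a : F) (ha0 : a ≠ 0) (ha : ¬ IsSquare a) :
    IsIndep (strongPow (paley F) 2) {z : Fin 2 → F | ∃ x : F, z = ![x, a * x]} ∧
    Nat.card {z : Fin 2 → F | ∃ x : F, z = ![x, a * x]} = Fintype.card F ∧
    Fintype.card F ≤ alphaLin (paley F) 2 ∧
    Real.sqrt (Fintype.card F) ≤
      ⨆ n : ℕ, ((alphaLin (paley F) (n + 1) : ℝ) ^ ((1 : ℝ) / ((n : ℝ) + 1))) :=
  stmt12_general hq a ha
end

section
/- For the Paley graph P_q with q ≡ 1 (mod 4) a prime power, the linear Shannon capacity equals √q: every linear independent set in P_q^n has size at most q^{n/2}, and linear independent sets of size q^k exist in P_q^{2k}. -/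
/-!
A nonzero vector of an independent subspace `W ⊆ Fⁿ` cannot have only square coordinates, so it
has a coordinate `c` with `c ^ ((q - 1) / 2) = -1`. Writing `W` in coordinates `y ∈ F^d`, the
polynomial `∏ᵢ (1 + wᵢ(y) ^ ((q - 1) / 2))`, of degree at most `n (q - 1) / 2`, is then the
indicator of `y = 0`; as a polynomial of degree `< (q - 1) d` sums to zero over `F^d`, this
forces `2d ≤ n`. Conversely, for a nonsquare `a` any two points of the line `{(x, a x)}` differ
by a nonsquare in some coordinate; as `-1` is a square, its `k`-th power is an independent
subspace of size `q^k`.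
-/

open SimpleGraph MvPolynomial

open Module

theorem MvPolynomial.card_sub_one_mul_card_le_totalDegree {K σ : Type*} [Field K] [Fintype K]
    [Fintype σ] (f : MvPolynomial σ K)
    (h0 : eval 0 f ≠ 0) (hf : ∀ x ≠ 0, eval x f = 0) :
    (Fintype.card K - 1) * Fintype.card σ ≤ f.totalDegree := by
  classical
  by_contra! hlt
  have hsum : ∑ x, eval x f = eval 0 f :=
    Fintype.sum_eq_single 0 fun x hx => hf x hx
  exact h0 (hsum ▸ f.sum_eval_eq_zero hlt)

theorem not_isSquare_mul_of_isSquare {F : Type*} [Field F] {a b : F} (ha : ¬IsSquare a)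
    (hb : IsSquare b) (hb0 : b ≠ 0) : ¬IsSquare (a * b) :=
  fun hab => ha (by simpa [hb0] using hab.div hb)

theorem FiniteField.pow_card_div_two_eq_neg_one {F : Type*} [Field F] [Fintype F]
    (hF : ringChar F ≠ 2) {a : F} (ha : ¬IsSquare a) : a ^ (Fintype.card F / 2) = -1 := by
  classical
  rw [← quadraticChar_eq_pow_of_char_ne_two' hF, quadraticChar_neg_one_iff_not_isSquare.mpr ha]
  simp

section Code

variable {F ι : Type*} [Field F] [Fintype F] [Fintype ι]

theorem two_mul_card_le_of_forall_exists_not_isSquare {σ : Type*} [Fintype σ]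
    (hF : ringChar F ≠ 2) (L : (σ → F) →ₗ[F] (ι → F))
    (hL : ∀ x ≠ 0, ∃ i, ¬IsSquare (L x i)) :
    2 * Fintype.card σ ≤ Fintype.card ι := by
  classical
  set e := Fintype.card F / 2
  have he : 0 < e := Nat.div_pos Fintype.one_lt_card two_pos
  have hq : Fintype.card F - 1 = 2 * e := by
    have := FiniteField.odd_card_of_char_ne_two hF
    omega
  -- `P` vanishes off the origin: a nonsquare coordinate `c` gives the factor `1 + c ^ e = 0`.
  let P : MvPolynomial σ F := ∏ i, (1 + (LinearMap.toMatrix' L).toMvPolynomial i ^ e)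
  have hP : ∀ x, eval x P = ∏ i, (1 + L x i ^ e) := fun x => by
    simp [P, Matrix.toMvPolynomial_eval_eq_apply]
  have hdeg : P.totalDegree ≤ Fintype.card ι * e := by
    refine (totalDegree_finsetProd _ _).trans ?_
    refine (Finset.sum_le_card_nsmul _ _ e fun i _ => ?_).trans_eq (by simp)
    refine (totalDegree_add _ _).trans (max_le (by simp) ?_)
    refine (totalDegree_pow _ _).trans ?_
    simpa using Nat.mul_le_mul_left e (Matrix.toMvPolynomial_totalDegree_le _ i)
  have hP0 : eval 0 P ≠ 0 := by
    rw [hP]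
    simp [he.ne']
  have hPx : ∀ x ≠ 0, eval x P = 0 := fun x hx => by
    obtain ⟨i, hi⟩ := hL x hx
    rw [hP]
    exact Finset.prod_eq_zero (Finset.mem_univ i) (by
      rw [FiniteField.pow_card_div_two_eq_neg_one hF hi, add_neg_cancel])
  have := (P.card_sub_one_mul_card_le_totalDegree hP0 hPx).trans hdeg
  rw [hq] at this
  nlinarith

theorem Submodule.two_mul_finrank_le_of_forall_exists_not_isSquare (hF : ringChar F ≠ 2)
    (W : Submodule F (ι → F)) (hW : ∀ w ∈ W, w ≠ 0 → ∃ i, ¬IsSquare (w i)) :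
    2 * finrank F W ≤ Fintype.card ι := by
  let b := Module.finBasis F W
  have hb : ∀ x ≠ 0, ∃ i, ¬IsSquare ((W.subtype ∘ₗ b.equivFun.symm.toLinearMap) x i) :=
    fun x hx => hW _ (b.equivFun.symm x).2 <|
      Submodule.coe_eq_zero.not.mpr (b.equivFun.symm.map_ne_zero_iff.mpr hx)
  simpa using two_mul_card_le_of_forall_exists_not_isSquare hF _ hb

end Code

section Paley

variable {F : Type*} [Field F] {n : ℕ}

theorem IsIndep.exists_not_isSquare_sub {s : Set (Fin n → F)}
    (hs : IsIndep (strongPow (paley F) n) s) {x y : Fin n → F} (hx : x ∈ s) (hy : y ∈ s)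
    (hxy : x ≠ y) : ∃ i, ¬IsSquare (x i - y i) := by
  by_contra! h
  refine hs x hx y hy ⟨hxy, fun i => ?_⟩
  by_cases hi : x i = y i
  · exact .inl hi
  · exact .inr ⟨hi, .inl ⟨sub_ne_zero.mpr hi, h i⟩⟩

theorem isIndep_strongPow_paley_of_forall_exists_not_isSquare (h : IsSquare (-1 : F))
    {s : Set (Fin n → F)}
    (hs : ∀ x ∈ s, ∀ y ∈ s, x ≠ y → ∃ i, ¬IsSquare (x i - y i)) :
    IsIndep (strongPow (paley F) n) s := by
  rintro x hx y hy ⟨hxy, hadj⟩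
  obtain ⟨i, hi⟩ := hs x hx y hy hxy
  rcases hadj i with hi' | ⟨-, ⟨-, hsq⟩ | ⟨-, hsq⟩⟩
  · exact hi (by simp [hi'])
  · exact hi hsq
  · exact hi (by simpa using h.mul hsq)

theorem natCard_le_of_isIndep_strongPow_paley [Fintype F] (hF : ringChar F ≠ 2)
    (W : Submodule F (Fin n → F)) (hW : IsIndep (strongPow (paley F) n) (W : Set (Fin n → F))) :
    (Nat.card W : ℝ) ≤ (Fintype.card F : ℝ) ^ ((n : ℝ) / 2) := by
  have hd : 2 * finrank F W ≤ n := by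
    simpa using W.two_mul_finrank_le_of_forall_exists_not_isSquare hF fun w hw hw0 => by
      simpa using hW.exists_not_isSquare_sub hw W.zero_mem hw0
  have hq : (1 : ℝ) ≤ Fintype.card F := mod_cast Fintype.card_pos
  calc (Nat.card W : ℝ) = (Fintype.card F : ℝ) ^ (finrank F W : ℝ) := by
        rw [Module.natCard_eq_pow_finrank (K := F), Nat.card_eq_fintype_card, Real.rpow_natCast]
        norm_cast
    _ ≤ (Fintype.card F : ℝ) ^ ((n : ℝ) / 2) :=
        Real.rpow_le_rpow_of_exponent_le hq (by rw [le_div_iff₀ two_pos]; exact_mod_cast by lia)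

/-- The `k`-th power of the line `{(x, a x)}` of `F²`. -/
def scaledPairs (a : F) (k : ℕ) : (Fin k → F) →ₗ[F] (Fin (2 * k) → F) :=
  (LinearEquiv.funCongrLeft F F finProdFinEquiv.symm).toLinearMap ∘ₗ
    LinearMap.pi fun p : Fin 2 × Fin k => ![1, a] p.1 • LinearMap.proj p.2

@[simp]
theorem scaledPairs_apply (a : F) {k : ℕ} (y : Fin k → F) (b : Fin 2) (j : Fin k) :
    scaledPairs a k y (finProdFinEquiv (b, j)) = ![1, a] b * y j := by
  simp [scaledPairs]

theorem exists_not_isSquare_scaledPairs {a : F} (ha : ¬IsSquare a) {k : ℕ} {y : Fin k → F}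
    (hy : y ≠ 0) : ∃ i, ¬IsSquare (scaledPairs a k y i) := by
  obtain ⟨j, hj⟩ := Function.ne_iff.mp hy
  by_cases hsq : IsSquare (y j)
  · exact ⟨finProdFinEquiv (1, j), by simpa using not_isSquare_mul_of_isSquare ha hsq hj⟩
  · exact ⟨finProdFinEquiv (0, j), by simpa using hsq⟩

theorem isIndep_range_scaledPairs (h : IsSquare (-1 : F)) {a : F} (ha : ¬IsSquare a) (k : ℕ) :
    IsIndep (strongPow (paley F) (2 * k)) (LinearMap.range (scaledPairs a k) : Set _) := by
  refine isIndep_strongPow_paley_of_forall_exists_not_isSquare h ?_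
  rintro _ ⟨u, rfl⟩ _ ⟨v, rfl⟩ huv
  obtain ⟨i, hi⟩ := exists_not_isSquare_scaledPairs ha (sub_ne_zero.mpr (ne_of_apply_ne _ huv))
  exact ⟨i, by simpa using hi⟩

theorem natCard_range_scaledPairs [Fintype F] {a : F} (ha : ¬IsSquare a) (k : ℕ) :
    Nat.card (LinearMap.range (scaledPairs a k)) = Fintype.card F ^ k := by
  have hinj : Function.Injective (scaledPairs a k) :=
    (injective_iff_map_eq_zero _).mpr fun y hy => by
      by_contra hy0
      obtain ⟨i, hi⟩ := exists_not_isSquare_scaledPairs ha hy0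
      exact hi (by simp [hy])
  rw [← Nat.card_congr (LinearEquiv.ofInjective _ hinj).toEquiv]
  simp

end Paley


theorem stmt13 {F : Type*} [Field F] [Fintype F] (hq : Fintype.card F % 4 = 1) :
    (∀ n : ℕ, ∀ W : Submodule F (Fin n → F),
      IsIndep (strongPow (paley F) n) (W : Set (Fin n → F)) →
      (Nat.card W : ℝ) ≤ (Fintype.card F : ℝ) ^ ((n : ℝ) / 2)) ∧
    (∀ k : ℕ, ∃ W : Submodule F (Fin (2 * k) → F),
      IsIndep (strongPow (paley F) (2 * k)) (W : Set (Fin (2 * k) → F)) ∧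
      Nat.card W = Fintype.card F ^ k) := by
  have hF : ringChar F ≠ 2 := fun h => by
    have := FiniteField.even_card_of_char_two h
    omega
  have hneg : IsSquare (-1 : F) := FiniteField.isSquare_neg_one_iff.mpr (by omega)
  obtain ⟨a, ha⟩ := FiniteField.exists_nonsquare hF
  exact ⟨fun n W hW => natCard_le_of_isIndep_strongPow_paley hF W hW, fun k =>
    ⟨_, isIndep_range_scaledPairs hneg ha k, natCard_range_scaledPairs ha k⟩⟩
end

section
/- Let p ≡ 1 (mod 4) be a prime with p > 13, and G = Γ(F_p, S) with S = {(p−1)/4+1, ..., 3(p−1)/4}. Then every linear independent set in G^n has size at most p^{n/2}, while α(G) ≥ (p+3)/4 > √p, so the Shannon capacity Θ(G) ≥ (p+3)/4 strictly exceeds the linear Shannon capacity upper bound √p. -/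
open SimpleGraph MvPolynomial

/-!
Write `p = 4m + 1`. The residues `0, …, m` are pairwise at distance at most `m`, so no difference
lies in `S = {m+1, …, 3m}`: they form an independent set of size `(p+3)/4 > √p` in `G`, and
products of it are independent in `G^n`.

For a linear independent set `W ≤ 𝔽_p^n` of dimension `d`, every nonzero `w ∈ W` is non-adjacent
to `0`, so some coordinate of `w` lies in the set `T` of the `2m` nonzero non-neighbours of `0`.
In coordinates `y ∈ 𝔽_p^d` of `W`, the polynomial `∏ᵢ ∏_{t ∈ T} (wᵢ(y) - t)` of degree at most
`2mn` vanishes at every `y ≠ 0` but not at `y = 0`, so its values do not sum to zero; by the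
Chevalley–Warning argument its degree is then at least `(p - 1) d = 4md`. Hence `2d ≤ n` and
`|W| ≤ p^{n/2}`.
-/

open Finset

section PolynomialMethod

theorem MvPolynomial.totalDegree_sum_C_mul_X_sub_C_le {R σ : Type*} [CommRing R] [Fintype σ]
    (c : σ → R) (t : R) : (∑ j, C (c j) * X j - C t : MvPolynomial σ R).totalDegree ≤ 1 := by
  refine (totalDegree_sub_C_le _ _).trans <| (totalDegree_finsetSum _ _).trans <|
    Finset.sup_le fun j _ => ?_
  rw [C_mul_X_eq_monomial]
  exact (totalDegree_monomial_le _ _).trans (by simp)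

variable {K : Type*} [Field K] [Fintype K]

theorem MvPolynomial.card_sub_one_mul_le_totalDegree {σ : Type*} [Fintype σ] [DecidableEq σ]
    {f : MvPolynomial σ K} (hf : ∀ x, x ≠ 0 → eval x f = 0) (hf0 : eval 0 f ≠ 0) :
    (Fintype.card K - 1) * Fintype.card σ ≤ f.totalDegree := by
  by_contra! h
  exact hf0 ((Fintype.sum_eq_single 0 hf).symm.trans (sum_eval_eq_zero f h))

theorem Submodule.finrank_mul_card_sub_one_le {ι : Type*} [Fintype ι] {T : Finset K}
    (hT : (0 : K) ∉ T) (W : Submodule K (ι → K)) (hW : ∀ w ∈ W, w ≠ 0 → ∃ i, w i ∈ T) :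
    Module.finrank K W * (Fintype.card K - 1) ≤ Fintype.card ι * #T := by
  set d := Module.finrank K W
  let B := Module.finBasis K W
  let f : MvPolynomial (Fin d) K := ∏ i, ∏ t ∈ T, (∑ j, C ((B j : ι → K) i) * X j - C t)
  have heval : ∀ y, eval y f = ∏ i, ∏ t ∈ T, ((B.equivFun.symm y : ι → K) i - t) := by
    intro y
    simp [f, Module.Basis.equivFun_symm_apply, mul_comm]
  have hdeg : f.totalDegree ≤ Fintype.card ι * #T := by
    refine (totalDegree_finsetProd _ _).trans <| (sum_le_sum fun i _ =>
      (totalDegree_finsetProd _ _).trans <| sum_le_sum fun t _ =>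
        totalDegree_sum_C_mul_X_sub_C_le _ t).trans ?_
    simp
  have hvanish : ∀ y, y ≠ 0 → eval y f = 0 := by
    intro y hy
    obtain ⟨i, hi⟩ := hW _ (B.equivFun.symm y).2
      (by rwa [ne_eq, ZeroMemClass.coe_eq_zero, LinearEquiv.map_eq_zero_iff])
    rw [heval]
    exact prod_eq_zero (mem_univ i) (prod_eq_zero hi (sub_self _))
  have hf0 : eval 0 f ≠ 0 := by
    rw [heval]
    refine prod_ne_zero_iff.2 fun i _ => prod_ne_zero_iff.2 fun t ht => ?_
    simpa using ne_of_mem_of_not_mem ht hT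
  have := card_sub_one_mul_le_totalDegree hvanish hf0
  rw [Fintype.card_fin] at this
  linarith [mul_comm d (Fintype.card K - 1)]

end PolynomialMethod

section StrongPower

variable {V : Type*} {G : SimpleGraph V} {n : ℕ}

theorem IsIndep.exists_not_adj_of_strongPow {I : Set (Fin n → V)}
    (hI : IsIndep (strongPow G n) I) {x y : Fin n → V} (hx : x ∈ I) (hy : y ∈ I) (hxy : x ≠ y) :
    ∃ i, x i ≠ y i ∧ ¬ G.Adj (x i) (y i) := by
  by_contra! h
  exact hI x hx y hy ⟨hxy, fun i => or_iff_not_imp_left.2 (h i)⟩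

theorem IsIndep.piFinset_strongPow {I : Finset V} (hI : IsIndep G I) (n : ℕ) :
    IsIndep (strongPow G n) (Fintype.piFinset fun _ : Fin n => I : Set (Fin n → V)) := by
  intro x hx y hy ⟨hxy, hadj⟩
  simp only [mem_coe, Fintype.mem_piFinset] at hx hy
  obtain ⟨i, hi⟩ := Function.ne_iff.1 hxy
  exact (hadj i).elim hi (hI _ (hx i) _ (hy i))

end StrongPower

section LinearIndependentSets

variable {K : Type*} [Field K] [Fintype K] {n : ℕ}

theorem finrank_mul_card_sub_one_le_of_isIndep_strongPow {G : SimpleGraph K} {T : Finset K}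
    (hT0 : (0 : K) ∉ T) (hT : ∀ x, x ≠ 0 → ¬ G.Adj x 0 → x ∈ T) (W : Submodule K (Fin n → K))
    (hW : IsIndep (strongPow G n) (W : Set (Fin n → K))) :
    Module.finrank K W * (Fintype.card K - 1) ≤ n * #T := by
  simpa using W.finrank_mul_card_sub_one_le hT0 fun w hw hw0 =>
    let ⟨i, hi0, hi⟩ := hW.exists_not_adj_of_strongPow hw W.zero_mem hw0
    ⟨i, hT _ hi0 hi⟩

theorem finrank_mul_card_sub_one_le_of_isIndep_strongPow_cayley [DecidableEq K] {S : Set K}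
    {s : Finset K} (hsS : (s : Set K) ⊆ S) (hs0 : (0 : K) ∉ s) (W : Submodule K (Fin n → K))
    (hW : IsIndep (strongPow (cayley S) n) (W : Set (Fin n → K))) :
    Module.finrank K W * (Fintype.card K - 1) ≤ n * (Fintype.card K - 1 - #s) := by
  have hT : ∀ x, x ≠ 0 → ¬ (cayley S).Adj x 0 → x ∈ (insert 0 s)ᶜ := by
    intro x hx0 hx
    simp only [mem_compl, mem_insert, hx0, false_or]
    exact fun hxs => hx ⟨hx0, Or.inl (by simpa using hsS hxs)⟩
  have hcard : #(insert 0 s)ᶜ = Fintype.card K - 1 - #s := by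
    rw [card_compl, card_insert_of_notMem hs0]
    omega
  rw [← hcard]
  exact finrank_mul_card_sub_one_le_of_isIndep_strongPow (by simp) hT W hW

theorem Submodule.natCard_le_rpow_of_two_mul_finrank_le (W : Submodule K (Fin n → K))
    (hW : 2 * Module.finrank K W ≤ n) :
    (Nat.card W : ℝ) ≤ (Fintype.card K : ℝ) ^ ((n : ℝ) / 2) := by
  rw [Module.natCard_eq_pow_finrank (K := K), Nat.card_eq_fintype_card, Nat.cast_pow,
    ← Real.rpow_natCast]
  exact Real.rpow_le_rpow_of_exponent_le (mod_cast Fintype.card_pos)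
    (by rw [le_div_iff₀ two_pos]; exact_mod_cast (by omega : Module.finrank K W * 2 ≤ n))

end LinearIndependentSets

section MiddleResidues

theorem ZMod.natCast_injOn_Iio (p : ℕ) : Set.InjOn (Nat.cast : ℕ → ZMod p) (Set.Iio p) := by
  intro a ha b hb h
  rwa [ZMod.natCast_eq_natCast_iff', Nat.mod_eq_of_lt ha, Nat.mod_eq_of_lt hb] at h

variable {p m : ℕ}

def middleResidues (p m : ℕ) : Finset (ZMod p) := (Icc (m + 1) (3 * m)).image Nat.cast

def lowResidues (p m : ℕ) : Finset (ZMod p) := (range (m + 1)).image Nat.cast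

variable (hp : p = 4 * m + 1)
include hp

theorem card_middleResidues : #(middleResidues p m) = 2 * m := by
  rw [middleResidues, card_image_of_injOn, Nat.card_Icc]
  · omega
  · exact (ZMod.natCast_injOn_Iio p).mono fun k hk => by simp at hk ⊢; omega

theorem zero_notMem_middleResidues : (0 : ZMod p) ∉ middleResidues p m := by
  simp only [middleResidues, mem_image, mem_Icc, not_exists, not_and]
  intro k hk hk0
  have := ZMod.natCast_injOn_Iio p (by simp; omega) (by simp; omega) (hk0.trans Nat.cast_zero.symm)
  omega

theorem card_lowResidues : #(lowResidues p m) = m + 1 := by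
  rw [lowResidues, card_image_of_injOn, card_range]
  exact (ZMod.natCast_injOn_Iio p).mono fun k hk => by simp at hk ⊢; omega

theorem natCast_sub_natCast_notMem_middleResidues {a b : ℕ} (ha : a ≤ m) (hb : b ≤ m) :
    (a - b : ZMod p) ∉ middleResidues p m := by
  simp only [middleResidues, mem_image, mem_Icc, not_exists, not_and]
  intro s hs hab
  have : ((b + s : ℕ) : ZMod p) = a := by push_cast; rw [hab]; ring
  have := ZMod.natCast_injOn_Iio p (by simp; omega) (by simp; omega) this
  omega

theorem isIndep_cayley_lowResidues [Fact p.Prime] :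
    IsIndep (cayley (middleResidues p m : Set (ZMod p))) (lowResidues p m) := by
  simp only [IsIndep, lowResidues, coe_image, coe_range, Set.forall_mem_image, Set.mem_Iio]
  rintro a ha b hb ⟨-, hab | hba⟩
  · exact natCast_sub_natCast_notMem_middleResidues hp (by omega) (by omega) hab
  · exact natCast_sub_natCast_notMem_middleResidues hp (by omega) (by omega) hba

end MiddleResidues

theorem stmt16 (p : ℕ) [Fact p.Prime] (h4 : p % 4 = 1) (h13 : 13 < p) (S : Set (ZMod p))
    (hSdef : S = (fun k : ℕ => (k : ZMod p)) '' Set.Icc ((p - 1) / 4 + 1) (3 * (p - 1) / 4)) :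
    (∀ n : ℕ, ∀ W : Submodule (ZMod p) (Fin n → ZMod p),
      IsIndep (strongPow (cayley S) n) (W : Set (Fin n → ZMod p)) →
      (Nat.card W : ℝ) ≤ (p : ℝ) ^ ((n : ℝ) / 2)) ∧
    Real.sqrt p < ((p : ℝ) + 3) / 4 ∧
    (∃ I : Set (ZMod p), IsIndep (cayley S) I ∧ (p + 3) / 4 ≤ I.ncard) ∧
    (∀ n : ℕ, ∃ J : Set (Fin n → ZMod p),
      IsIndep (strongPow (cayley S) n) J ∧ ((p + 3) / 4) ^ n ≤ J.ncard) := by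
  obtain ⟨m, hp⟩ : ∃ m, p = 4 * m + 1 := ⟨p / 4, by omega⟩
  have hS : S = middleResidues p m := by
    rw [hSdef, middleResidues, coe_image, coe_Icc]
    congr 2 <;> omega
  have hlow : (p + 3) / 4 = m + 1 := by omega
  subst hS
  refine ⟨fun n W hW => ?_, ?_, ⟨_, isIndep_cayley_lowResidues hp, ?_⟩,
    fun n => ⟨_, (isIndep_cayley_lowResidues hp).piFinset_strongPow n, ?_⟩⟩
  · have h := finrank_mul_card_sub_one_le_of_isIndep_strongPow_cayley subset_rfl
      (zero_notMem_middleResidues hp) W hW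
    rw [ZMod.card, card_middleResidues hp, show p - 1 - 2 * m = 2 * m by omega,
      show p - 1 = 2 * (2 * m) by omega] at h
    have h2 : 2 * Module.finrank (ZMod p) W ≤ n :=
      Nat.le_of_mul_le_mul_right (c := 2 * m) (by linarith) (by omega)
    simpa [ZMod.card] using W.natCard_le_rpow_of_two_mul_finrank_le h2
  · have : (14 : ℝ) ≤ p := by exact_mod_cast h13
    rw [Real.sqrt_lt' (by positivity)]
    nlinarith
  · rw [Set.ncard_coe_finset, card_lowResidues hp, hlow]
  · rw [Set.ncard_coe_finset, Fintype.card_piFinset_const, card_lowResidues hp, hlow]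
end

section
/- Let G = Γ(F_p, S) be a Cayley graph over the cyclic group Z/pZ (p prime) that is isomorphic to its complement, and suppose (Ádám's conjecture for primes) that the complement connection set satisfies (F_p\{0})\S = a·S for some a ∈ F_p. Then the map x ↦ a·x is an isomorphism from G to its complement, and consequently {(x, ax) : x ∈ F_p} is a linear independent set of size p in G^2. -/
open SimpleGraph MvPolynomial

/-!
Multiplication by `a` exchanges `S` and its complement in `F \ {0}`: the hypothesis gives
`a * x ∉ S` for `x ∈ S` and `a * x ∈ S` for `0 ≠ x ∉ S`. Hence `x ↦ a * x` maps edges of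
`Γ(F, S)` exactly onto non-edges. For any isomorphism `e : G ≃g Gᶜ`, the graph `{(x, e x)}` is
independent in the strong square: two of its points adjacent in the first coordinate are
non-adjacent, and distinct, in the second.
-/

section StrongSquare

variable {V : Type*}

theorem isIndep_strongPow_two_of_iso_compl {G : SimpleGraph V} (e : G ≃g Gᶜ) :
    IsIndep (strongPow G 2) {z : Fin 2 → V | ∃ x : V, z = ![x, e x]} := by
  rintro _ ⟨x, rfl⟩ _ ⟨y, rfl⟩ ⟨hne, hadj⟩
  have hxy : x ≠ y := by rintro rfl; exact hne rfl
  have hG : G.Adj x y := (hadj 0).resolve_left hxy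
  rcases hadj 1 with heq | hG'
  · exact hxy (e.injective heq)
  · exact ((compl_adj G _ _).mp (e.map_adj_iff.mpr hG)).2 hG'

theorem Nat.card_setOf_eq_vec_two (f : V → V) :
    Nat.card {z : Fin 2 → V | ∃ x : V, z = ![x, f x]} = Nat.card V := by
  have hrange : {z : Fin 2 → V | ∃ x : V, z = ![x, f x]} = Set.range fun x => ![x, f x] := by
    ext z
    exact exists_congr fun _ => eq_comm
  rw [hrange, Nat.card_range_of_injective]
  intro x y h
  simpa using congrFun h 0

end StrongSquare

section Cayley

variable {F : Type*} [Field F] {S : Set F} {a : F}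

theorem cayley_adj_iff_of_neg_mem (hS : ∀ s ∈ S, -s ∈ S) (u v : F) :
    (cayley S).Adj u v ↔ u ≠ v ∧ u - v ∈ S := by
  exact ⟨fun ⟨hne, h⟩ => ⟨hne, h.elim id fun h' => by simpa using hS _ h'⟩,
    fun ⟨hne, h⟩ => ⟨hne, Or.inl h⟩⟩

theorem ne_zero_of_compl_eq_image_mul (hAdam : {x : F | x ≠ 0} \ S = (fun x => a * x) '' S) :
    a ≠ 0 := by
  rintro rfl
  have hS : S = ∅ := by
    refine Set.eq_empty_of_forall_notMem fun s hs => ?_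
    have h0 : (0 : F) ∈ (fun x => 0 * x) '' S := ⟨s, hs, zero_mul s⟩
    rw [← hAdam] at h0
    exact h0.1 rfl
  have h1 : (1 : F) ∈ {x : F | x ≠ 0} \ S := ⟨one_ne_zero, hS ▸ Set.notMem_empty 1⟩
  rw [hAdam, hS, Set.image_empty] at h1
  exact h1

theorem mul_mem_iff_notMem_of_compl_eq_image_mul
    (hAdam : {x : F | x ≠ 0} \ S = (fun x => a * x) '' S) {x : F} (hx : x ≠ 0) :
    a * x ∈ S ↔ x ∉ S := by
  have ha := ne_zero_of_compl_eq_image_mul hAdam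
  constructor
  · intro hax hxS
    have h : a * x ∈ {x : F | x ≠ 0} \ S := hAdam ▸ ⟨x, hxS, rfl⟩
    exact h.2 hax
  · intro hxS
    by_contra hax
    have h : a * x ∈ {x : F | x ≠ 0} \ S := ⟨mul_ne_zero ha hx, hax⟩
    rw [hAdam] at h
    obtain ⟨s, hs, hsx⟩ := h
    exact hxS (mul_left_cancel₀ ha hsx ▸ hs)

theorem cayley_compl_adj_mul_iff (hS : ∀ s ∈ S, -s ∈ S)
    (hAdam : {x : F | x ≠ 0} \ S = (fun x => a * x) '' S) (u v : F) :
    (cayley S)ᶜ.Adj (a * u) (a * v) ↔ (cayley S).Adj u v := by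
  have ha := ne_zero_of_compl_eq_image_mul hAdam
  rw [compl_adj, cayley_adj_iff_of_neg_mem hS, cayley_adj_iff_of_neg_mem hS, ← mul_sub,
    (mul_right_injective₀ ha).ne_iff]
  by_cases huv : u = v
  · simp [huv]
  · rw [mul_mem_iff_notMem_of_compl_eq_image_mul hAdam (sub_ne_zero.mpr huv)]
    tauto

def cayleyMulIsoCompl (hS : ∀ s ∈ S, -s ∈ S)
    (hAdam : {x : F | x ≠ 0} \ S = (fun x => a * x) '' S) : cayley S ≃g (cayley S)ᶜ where
  toEquiv := Equiv.mulLeft₀ a (ne_zero_of_compl_eq_image_mul hAdam)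
  map_rel_iff' := cayley_compl_adj_mul_iff hS hAdam _ _

end Cayley

theorem stmt19_general (p : ℕ) [Fact p.Prime] (S : Set (ZMod p))
    (hS : ∀ s ∈ S, -s ∈ S)
    (a : ZMod p) (hAdam : {x : ZMod p | x ≠ 0} \ S = (fun x => a * x) '' S) :
    (∃ e : cayley S ≃g (cayley S)ᶜ, ∀ x : ZMod p, e x = a * x) ∧
    IsIndep (strongPow (cayley S) 2) {z : Fin 2 → ZMod p | ∃ x : ZMod p, z = ![x, a * x]} ∧
    Nat.card {z : Fin 2 → ZMod p | ∃ x : ZMod p, z = ![x, a * x]} = p := by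
  let e := cayleyMulIsoCompl hS hAdam
  exact ⟨⟨e, fun _ => rfl⟩, isIndep_strongPow_two_of_iso_compl e,
    (Nat.card_setOf_eq_vec_two (a * ·)).trans (Nat.card_zmod p)⟩

theorem stmt19 (p : ℕ) [Fact p.Prime] (S : Set (ZMod p))
    (hS : ∀ s ∈ S, -s ∈ S) (h0 : (0 : ZMod p) ∉ S)
    (hIso : Nonempty (cayley S ≃g (cayley S)ᶜ))
    (a : ZMod p) (hAdam : {x : ZMod p | x ≠ 0} \ S = (fun x => a * x) '' S) :
    (∃ e : cayley S ≃g (cayley S)ᶜ, ∀ x : ZMod p, e x = a * x) ∧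
    IsIndep (strongPow (cayley S) 2) {z : Fin 2 → ZMod p | ∃ x : ZMod p, z = ![x, a * x]} ∧
    Nat.card {z : Fin 2 → ZMod p | ∃ x : ZMod p, z = ![x, a * x]} = p :=
  stmt19_general p S hS a hAdam
end
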